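/- Let b ∈ (0,1). Suppose σ, μ : (−π/2, π/2) × ℝ → ℝ are twice continuously differentiable and satisfy, at every point (θ,x), the system ∂σ/∂θ + b cos θ ∂μ/∂θ + b sin θ · μ = 0 and ∂σ/∂x + b cos θ ∂μ/∂x = 0. Then ∂μ/∂x ≡ 0 and ∂σ/∂x ≡ 0 on (−π/2, π/2) × ℝ; in particular σ and μ depend only on θ. -/

import Mathlib

/-!
Statement 3: the λ-equations for the inverted pendulum cart force `σ` and `μ`
to be independent of `x` on the strip `(−π/2, π/2) × ℝ`.
-/

noncomputable section

open Real Set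

/-- Partial derivative in the `θ` (first) direction. -/
def pdth (f : ℝ × ℝ → ℝ) (p : ℝ × ℝ) : ℝ := fderiv ℝ f p (1, 0)

/-- Partial derivative in the `x` (second) direction. -/
def pdx (f : ℝ × ℝ → ℝ) (p : ℝ × ℝ) : ℝ := fderiv ℝ f p (0, 1)

/-- The strip `(−π/2, π/2) × ℝ`. -/
def strip : Set (ℝ × ℝ) := Ioo (-(π / 2)) (π / 2) ×ˢ (univ : Set ℝ)

/-!
Differentiate the first equation in `x` and the second in `θ`. By symmetry of second derivatives
the mixed partials of `σ` and `μ` cancel in the difference, leaving `2 b sin θ · ∂μ/∂x = 0`.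
So `∂μ/∂x` vanishes off the line `θ = 0`, hence everywhere on the strip by continuity, and then
the second equation gives `∂σ/∂x = 0`; the strip is a union of lines `{θ} × ℝ`, along which
`σ` and `μ` are therefore constant.
-/

open Topology

section SecondDerivative

variable {E F : Type*} [NormedAddCommGroup E] [NormedSpace ℝ E]
  [NormedAddCommGroup F] [NormedSpace ℝ F]

lemma fderiv_fderiv_apply {f : E → F} {p : E} (hf : DifferentiableAt ℝ (fderiv ℝ f) p)
    (v w : E) : fderiv ℝ (fun q => fderiv ℝ f q v) p w = fderiv ℝ (fderiv ℝ f) p w v := by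
  rw [fderiv_clm_apply hf (differentiableAt_const v)]
  simp

lemma ContDiffAt.differentiableAt_fderiv {f : E → F} {p : E} (hf : ContDiffAt ℝ 2 f p) :
    DifferentiableAt ℝ (fderiv ℝ f) p :=
  (hf.fderiv_right (m := 1) (by norm_num)).differentiableAt one_ne_zero

end SecondDerivative

lemma isOpen_strip : IsOpen strip := isOpen_Ioo.prod isOpen_univ

section PartialDerivatives

variable {f g : ℝ × ℝ → ℝ} {p : ℝ × ℝ}

lemma ContDiffAt.differentiableAt_pdth (hf : ContDiffAt ℝ 2 f p) : DifferentiableAt ℝ (pdth f) p :=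
  hf.differentiableAt_fderiv.clm_apply (differentiableAt_const _)

lemma ContDiffAt.differentiableAt_pdx (hf : ContDiffAt ℝ 2 f p) : DifferentiableAt ℝ (pdx f) p :=
  hf.differentiableAt_fderiv.clm_apply (differentiableAt_const _)

lemma pdx_pdth_comm (hf : ContDiffAt ℝ 2 f p) : pdx (pdth f) p = pdth (pdx f) p := by
  change fderiv ℝ (fun q => fderiv ℝ f q (1, 0)) p (0, 1)
    = fderiv ℝ (fun q => fderiv ℝ f q (0, 1)) p (1, 0)
  rw [fderiv_fderiv_apply hf.differentiableAt_fderiv,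
    fderiv_fderiv_apply hf.differentiableAt_fderiv]
  exact hf.isSymmSndFDerivAt (by simp) _ _

lemma pdx_add (hf : DifferentiableAt ℝ f p) (hg : DifferentiableAt ℝ g p) :
    pdx (fun q => f q + g q) p = pdx f p + pdx g p := by
  simp [pdx, fderiv_fun_add hf hg]

lemma pdth_add (hf : DifferentiableAt ℝ f p) (hg : DifferentiableAt ℝ g p) :
    pdth (fun q => f q + g q) p = pdth f p + pdth g p := by
  simp [pdth, fderiv_fun_add hf hg]

lemma pdx_mul_fst {c : ℝ → ℝ} (hc : DifferentiableAt ℝ c p.1) (hg : DifferentiableAt ℝ g p) :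
    pdx (fun q => c q.1 * g q) p = c p.1 * pdx g p := by
  have hc' : HasFDerivAt (fun q : ℝ × ℝ => c q.1)
      (deriv c p.1 • ContinuousLinearMap.fst ℝ ℝ ℝ) p :=
    hc.hasDerivAt.comp_hasFDerivAt p hasFDerivAt_fst
  rw [pdx, pdx, (hc'.fun_mul hg.hasFDerivAt).fderiv]
  simp

lemma pdth_mul_fst {c : ℝ → ℝ} {c' : ℝ} (hc : HasDerivAt c c' p.1) (hg : DifferentiableAt ℝ g p) :
    pdth (fun q => c q.1 * g q) p = c' * g p + c p.1 * pdth g p := by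
  have hc' : HasFDerivAt (fun q : ℝ × ℝ => c q.1) (c' • ContinuousLinearMap.fst ℝ ℝ ℝ) p :=
    hc.comp_hasFDerivAt p hasFDerivAt_fst
  rw [pdth, pdth, (hc'.fun_mul hg.hasFDerivAt).fderiv]
  simp only [add_apply, smul_apply, smul_eq_mul, ContinuousLinearMap.coe_fst', mul_one]
  ring

lemma pdx_eq_zero_of_eventually (h : ∀ᶠ q in 𝓝 p, f q = 0) : pdx f p = 0 := by
  have h' : f =ᶠ[𝓝 p] fun _ => 0 := h
  simp [pdx, h'.fderiv_eq]

lemma pdth_eq_zero_of_eventually (h : ∀ᶠ q in 𝓝 p, f q = 0) : pdth f p = 0 := by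
  have h' : f =ᶠ[𝓝 p] fun _ => 0 := h
  simp [pdth, h'.fderiv_eq]

end PartialDerivatives

lemma sin_mul_pdx_eq_zero {b : ℝ} (hb : b ≠ 0) {σ μ : ℝ × ℝ → ℝ} {p : ℝ × ℝ}
    (hσ : ContDiffAt ℝ 2 σ p) (hμ : ContDiffAt ℝ 2 μ p)
    (heq1 : ∀ᶠ q in 𝓝 p, pdth σ q + b * cos q.1 * pdth μ q + b * sin q.1 * μ q = 0)
    (heq2 : ∀ᶠ q in 𝓝 p, pdx σ q + b * cos q.1 * pdx μ q = 0) :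
    sin p.1 * pdx μ p = 0 := by
  have hcos : HasDerivAt (fun t => b * cos t) (b * -sin p.1) p.1 :=
    (hasDerivAt_cos p.1).const_mul b
  have hσθ := hσ.differentiableAt_pdth
  have hσx := hσ.differentiableAt_pdx
  have hμθ := hμ.differentiableAt_pdth
  have hμx := hμ.differentiableAt_pdx
  have hμ' := hμ.differentiableAt two_ne_zero
  have hx : pdx (pdth σ) p + b * cos p.1 * pdx (pdth μ) p + b * sin p.1 * pdx μ p = 0 := by
    have := pdx_eq_zero_of_eventually heq1
    rwa [pdx_add (by fun_prop) (by fun_prop), pdx_add hσθ (by fun_prop),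
      pdx_mul_fst (c := fun t => b * cos t) (by fun_prop) hμθ,
      pdx_mul_fst (c := fun t => b * sin t) (by fun_prop) hμ'] at this
  have hθ : pdth (pdx σ) p + b * cos p.1 * pdth (pdx μ) p - b * sin p.1 * pdx μ p = 0 := by
    have := pdth_eq_zero_of_eventually heq2
    rw [pdth_add hσx (by fun_prop), pdth_mul_fst hcos hμx] at this
    linarith
  rw [pdx_pdth_comm hσ, pdx_pdth_comm hμ] at hx
  have : 2 * b * (sin p.1 * pdx μ p) = 0 := by linarith
  simpa [hb] using this

lemma continuousOn_pdx {f : ℝ × ℝ → ℝ} {s : Set (ℝ × ℝ)} (hs : IsOpen s)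
    (hf : ContDiffOn ℝ 1 f s) : ContinuousOn (pdx f) s :=
  (ContinuousLinearMap.apply ℝ ℝ ((0 : ℝ), (1 : ℝ))).continuous.comp_continuousOn
    (hf.continuousOn_fderiv_of_isOpen hs le_rfl)

lemma sin_ne_zero_of_mem_strip {p : ℝ × ℝ} (hp : p ∈ strip) (h : p.1 ≠ 0) : sin p.1 ≠ 0 :=
  fun hsin => h <| (sin_eq_zero_iff_of_lt_of_lt (by linarith [hp.1.1, pi_pos])
    (by linarith [hp.1.2, pi_pos])).mp hsin

lemma strip_subset_closure_fst_ne_zero : strip ⊆ closure (strip ∩ {p | p.1 ≠ 0}) :=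
  ((dense_compl_singleton (0 : ℝ)).preimage isOpenMap_fst).open_subset_closure_inter isOpen_strip

lemma eq_zero_of_sin_mul_eq_zero {g : ℝ × ℝ → ℝ} (hg : ContinuousOn g strip)
    (h : ∀ p ∈ strip, sin p.1 * g p = 0) : ∀ p ∈ strip, g p = 0 := by
  have hoff : EqOn g 0 (strip ∩ {p | p.1 ≠ 0}) := fun p hp =>
    (mul_eq_zero.mp (h p hp.1)).resolve_left (sin_ne_zero_of_mem_strip hp.1 hp.2)
  exact hoff.of_subset_closure hg continuousOn_const inter_subset_left
    strip_subset_closure_fst_ne_zero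

lemma eq_of_pdx_eq_zero {f : ℝ × ℝ → ℝ} (hf : DifferentiableOn ℝ f strip)
    (hfx : ∀ p ∈ strip, pdx f p = 0) {p q : ℝ × ℝ} (hp : p ∈ strip) (hpq : p.1 = q.1) :
    f p = f q := by
  have hline : ∀ x : ℝ, HasDerivAt (fun x => f (p.1, x)) 0 x := fun x => by
    have hmem : (p.1, x) ∈ strip := ⟨hp.1, trivial⟩
    have hfd := (hf.differentiableAt (isOpen_strip.mem_nhds hmem)).hasFDerivAt
    rw [← hfx _ hmem]
    exact hfd.comp_hasDerivAt x ((hasDerivAt_const x p.1).prodMk (hasDerivAt_id x))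
  exact (is_const_of_deriv_eq_zero (fun x => (hline x).differentiableAt)
    (fun x => (hline x).deriv) p.2 q.2).trans (congrArg f (Prod.ext hpq rfl))

theorem statement3 (b : ℝ) (hb : b ∈ Ioo (0 : ℝ) 1)
    (σ μ : ℝ × ℝ → ℝ)
    (hσ : ContDiffOn ℝ 2 σ strip) (hμ : ContDiffOn ℝ 2 μ strip)
    (heq1 : ∀ p ∈ strip,
      pdth σ p + b * Real.cos p.1 * pdth μ p + b * Real.sin p.1 * μ p = 0)
    (heq2 : ∀ p ∈ strip,
      pdx σ p + b * Real.cos p.1 * pdx μ p = 0) :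
    (∀ p ∈ strip, pdx μ p = 0) ∧ (∀ p ∈ strip, pdx σ p = 0) ∧
      (∀ p ∈ strip, ∀ q ∈ strip, p.1 = q.1 → σ p = σ q ∧ μ p = μ q) := by
  have hsin : ∀ p ∈ strip, sin p.1 * pdx μ p = 0 := fun p hp =>
    have hnhds := isOpen_strip.mem_nhds hp
    sin_mul_pdx_eq_zero hb.1.ne' (hσ.contDiffAt hnhds) (hμ.contDiffAt hnhds)
      (Filter.eventually_of_mem hnhds heq1) (Filter.eventually_of_mem hnhds heq2)
  have hμx : ∀ p ∈ strip, pdx μ p = 0 :=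
    eq_zero_of_sin_mul_eq_zero (continuousOn_pdx isOpen_strip (hμ.of_le one_le_two)) hsin
  have hσx : ∀ p ∈ strip, pdx σ p = 0 := fun p hp => by simpa [hμx p hp] using heq2 p hp
  refine ⟨hμx, hσx, fun p hp q _ hpq => ⟨?_, ?_⟩⟩
  · exact eq_of_pdx_eq_zero (hσ.differentiableOn two_ne_zero) hσx hp hpq
  · exact eq_of_pdx_eq_zero (hμ.differentiableOn two_ne_zero) hμx hp hpq
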